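/- Let R be a discrete valuation ring with fraction field L and residue field k, let Γ be a group, and let ρ₁, ρ₂ : Γ → GL_r(R) be two representations such that the reduction of ρ₁ modulo the maximal ideal is irreducible over k. If ρ₁ and ρ₂ become conjugate by an element of GL_r(L), then they are conjugate by an element of GL_r(R). -/

import Mathlib

/-!
Over the valuation ring `R`, the conjugating matrix `g` can be rescaled by a nonzero scalar of
`L` so that its entries lie in `R` and one of them equals `1` (divide by an entry of largest
valuation). The rescaled matrix `A` still intertwines `ρ₁` and `ρ₂`, now over `R`, and its
reduction modulo the maximal ideal is a nonzero intertwiner of the reductions. Its kernel is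
invariant under the irreducible reduction of `ρ₁`, hence zero, so the reduction of `A` is
invertible; since `R` is local, `A` itself is invertible.
-/

theorem ValuationRing.exists_smul_algebraMap_eq_of_ne_zero
    (R : Type*) {K ι : Type*} [CommRing R] [IsDomain R] [ValuationRing R] [Field K]
    [Algebra R K] [IsFractionRing R K] [Finite ι] {v : ι → K} (hv : v ≠ 0) :
    ∃ c : K, c ≠ 0 ∧ ∃ a : ι → R, (∃ i, a i = 1) ∧ v = c • (algebraMap R K ∘ a) := by
  obtain ⟨j₀, -⟩ := Function.ne_iff.mp hv
  have : Nonempty ι := ⟨j₀⟩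
  have := Fintype.ofFinite ι
  let val := ValuationRing.valuation R K
  obtain ⟨i, -, hi⟩ := Finset.exists_max_image Finset.univ (val ∘ v) Finset.univ_nonempty
  have hvi : v i ≠ 0 := by
    intro h
    refine hv (funext fun j => ?_)
    simpa [h] using hi j (Finset.mem_univ j)
  have hint : ∀ j, ∃ a : R, algebraMap R K a = v j / v i := fun j =>
    (ValuationRing.mem_integer_iff R K _).mp <| by
      rw [Valuation.mem_integer_iff, map_div₀]
      exact div_le_one_of_le₀ (hi j (Finset.mem_univ j)) zero_le
  choose a ha using hint
  refine ⟨v i, hvi, a, ⟨i, IsFractionRing.injective R K ?_⟩, funext fun j => ?_⟩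
  · rw [ha, div_self hvi, map_one]
  · simp [ha, mul_div_cancel₀ _ hvi]

theorem Matrix.exists_smul_map_eq_of_ne_zero
    (R : Type*) {K m n : Type*} [CommRing R] [IsDomain R] [ValuationRing R] [Field K]
    [Algebra R K] [IsFractionRing R K] [Finite m] [Finite n] {g : Matrix m n K} (hg : g ≠ 0) :
    ∃ c : K, c ≠ 0 ∧ ∃ A : Matrix m n R, (∃ i j, A i j = 1) ∧ g = c • A.map (algebraMap R K) := by
  obtain ⟨c, hc, a, ⟨⟨i, j⟩, ha⟩, hga⟩ :=
    ValuationRing.exists_smul_algebraMap_eq_of_ne_zero R (v := fun p : m × n => g p.1 p.2)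
      fun h => hg (funext₂ fun i j => congrFun h (i, j))
  exact ⟨c, hc, Matrix.of fun i j => a (i, j), ⟨i, j, ha⟩,
    funext₂ fun i j => congrFun hga (i, j)⟩

theorem Matrix.eq_zero_or_isUnit_of_mul_eq_mul
    {k n ι : Type*} [Field k] [Fintype n] [DecidableEq n] {P Q : ι → Matrix n n k}
    (hirr : ∀ W : Submodule k (n → k), (∀ i, ∀ x ∈ W, (P i).mulVec x ∈ W) → W = ⊥ ∨ W = ⊤)
    {A : Matrix n n k} (hA : ∀ i, A * P i = Q i * A) : A = 0 ∨ IsUnit A := by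
  have hker : ∀ i, ∀ x ∈ LinearMap.ker A.mulVecLin,
      (P i).mulVec x ∈ LinearMap.ker A.mulVecLin := by
    intro i x hx
    simp only [LinearMap.mem_ker, mulVecLin_apply] at hx ⊢
    rw [mulVec_mulVec, hA, ← mulVec_mulVec, hx, mulVec_zero]
  rcases hirr _ hker with h | h
  · exact .inr (mulVec_injective_iff_isUnit.mp (LinearMap.ker_eq_bot.mp h))
  · exact .inl (toLin'.map_eq_zero_iff.mp (by simpa [toLin'_apply', LinearMap.ker_eq_top] using h))

theorem Matrix.isUnit_of_isUnit_map {R S n : Type*} [CommRing R] [CommRing S] [Fintype n]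
    [DecidableEq n] (f : R →+* S) [IsLocalHom f] {A : Matrix n n R} (h : IsUnit (A.map f)) :
    IsUnit A := by
  rw [isUnit_iff_isUnit_det, ← isUnit_map_iff f, RingHom.map_det]
  exact (isUnit_iff_isUnit_det _).mp h

theorem stmt_1
    (R : Type*) [CommRing R] [IsDomain R] [IsDiscreteValuationRing R]
    (L : Type*) [Field L] [Algebra R L] [IsFractionRing R L]
    (Γ : Type*) [Group Γ] (r : ℕ)
    (ρ₁ ρ₂ : Γ →* GL (Fin r) R)
    (hirr : ∀ W : Submodule (IsLocalRing.ResidueField R)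
        (Fin r → IsLocalRing.ResidueField R),
      (∀ γ : Γ, ∀ x ∈ W,
        ((ρ₁ γ : Matrix (Fin r) (Fin r) R).map (IsLocalRing.residue R)).mulVec x ∈ W) →
      W = ⊥ ∨ W = ⊤)
    (g : GL (Fin r) L)
    (hconj : ∀ γ : Γ,
      g * Units.map (RingHom.mapMatrix (algebraMap R L)).toMonoidHom (ρ₁ γ) * g⁻¹ =
        Units.map (RingHom.mapMatrix (algebraMap R L)).toMonoidHom (ρ₂ γ)) :
    ∃ h : GL (Fin r) R, ∀ γ : Γ, h * ρ₁ γ * h⁻¹ = ρ₂ γ := by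
  rcases isEmpty_or_nonempty (Fin r) with _ | _
  · exact ⟨1, fun γ => Subsingleton.elim _ _⟩
  obtain ⟨c, hc, A, ⟨i, j, hAij⟩, hg⟩ := Matrix.exists_smul_map_eq_of_ne_zero R g.ne_zero
  have hA : ∀ γ, A * (ρ₁ γ : Matrix (Fin r) (Fin r) R) = ρ₂ γ * A := by
    intro γ
    have h := congrArg Units.val (mul_inv_eq_iff_eq_mul.mp (hconj γ))
    simp only [Units.val_mul, Units.coe_map, hg, smul_mul_assoc, mul_smul_comm] at h
    apply Matrix.map_injective (IsFractionRing.injective R L)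
    simpa [Matrix.map_mul] using smul_right_injective _ hc h
  have hAbar : A.map (IsLocalRing.residue R) = 0 ∨ IsUnit (A.map (IsLocalRing.residue R)) :=
    Matrix.eq_zero_or_isUnit_of_mul_eq_mul hirr
      (Q := fun γ => (ρ₂ γ : Matrix (Fin r) (Fin r) R).map (IsLocalRing.residue R))
      fun γ => by simp only [← Matrix.map_mul, hA]
  have hAunit : IsUnit A := Matrix.isUnit_of_isUnit_map (IsLocalRing.residue R) <|
    hAbar.resolve_left fun h => one_ne_zero (α := IsLocalRing.ResidueField R) <| by
      simpa [hAij] using congrFun (congrFun h i) j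
  exact ⟨hAunit.unit, fun γ => mul_inv_eq_of_eq_mul (Units.ext (by simpa using hA γ))⟩
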